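/- arXiv:1502.07812 — 2 statements merged into one kernel-verified Lean document; each statement's English description precedes it below -/
import Mathlib

section
/- Let p be prime, l ≥ m, and let ID = (I₁,…,I_m), ID* = (I*₁,…,I*_n) with n ≥ m be vectors over ZMod p such that I_j ≠ I*_j for some j ≤ m. Then the (l−m+2) × (l+1) matrix whose first row is (1, I*₁,…,I*_n, 0,…,0), second row is (1, I₁,…,I_m, 0,…,0), and remaining l−m rows are standard basis vectors e_{m+2},…,e_{l+1}, has rank l−m+2. -/
/-- The matrix from the anonymity proof: row 0 is `(1, I*₁,…,I*ₙ, 0,…,0)`,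
row 1 is `(1, I₁,…,Iₘ, 0,…,0)`, and rows `k = 2,…,l-m+1` are the standard
basis vectors with a `1` in column `m + k - 1`. -/
def keyMatrix (p l m n : ℕ) (I : Fin m → ZMod p) (Istar : Fin n → ZMod p)
    (hmn : m ≤ n) (hnl : n ≤ l) :
    Matrix (Fin (l - m + 2)) (Fin (l + 1)) (ZMod p) :=
  fun i j =>
    if i.val = 0 then
      (if h0 : j.val = 0 then 1
       else if h : j.val ≤ n then Istar ⟨j.val - 1, by omega⟩ else 0)
    else if i.val = 1 then
      (if h0 : j.val = 0 then 1
       else if h : j.val ≤ m then I ⟨j.val - 1, by omega⟩ else 0)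
    else
      (if j.val = m + i.val - 1 then 1 else 0)


/-! Rows `2, …, l - m + 1` are the unit vectors `e_{m+1}, …, e_l`, so the rows are independent
as soon as rows `0` and `1`, restricted to the remaining columns `0, …, m`, are. Both
restrictions have a `1` in column `0`, so a dependence between them would force them to be
equal, which column `j + 1` (where `I_j ≠ I*_j`) rules out. -/

open Set Function

theorem linearIndependent_sumElim_single_of_restrict {K ι ι' κ : Type*} [Ring K] [DecidableEq κ]
    (w : ι → κ → K) {c : ι' → κ} (hc : Injective c)
    (hw : LinearIndependent K fun i (x : ↥(range c)ᶜ) => w i x) :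
    LinearIndependent K (Sum.elim w fun i => Pi.single (c i) 1) := by
  let restrict : (κ → K) →ₗ[K] (↥(range c)ᶜ → K) := LinearMap.funLeft K K Subtype.val
  have hw' : LinearIndependent K (restrict ∘ w) := hw
  refine hw'.of_comp.sum_type ((Pi.linearIndependent_single_one κ K).comp c hc) ?_
  refine (Submodule.range_ker_disjoint hw').mono_right (Submodule.span_le.mpr ?_)
  rintro _ ⟨i, rfl⟩
  ext ⟨x, hx⟩
  have : x ≠ c i := fun h => hx ⟨i, h.symm⟩
  simp [restrict, LinearMap.funLeft, this]

theorem linearIndependent_fin2_of_eq_of_ne {K κ : Type*} [Field K] {f : Fin 2 → κ → K}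
    {x y : κ} (hx : f 0 x = f 1 x) (hx0 : f 1 x ≠ 0) (hy : f 0 y ≠ f 1 y) :
    LinearIndependent K f := by
  refine linearIndependent_fin2.mpr ⟨fun h => hx0 (congrFun h x), fun a ha => hy ?_⟩
  have ha1 : a = 1 := by
    have := congrFun ha x
    simp only [Pi.smul_apply, smul_eq_mul, hx] at this
    exact (mul_eq_right₀ hx0).mp this
  simp [← ha, ha1]

section keyMatrix

variable {p l m n : ℕ} {I : Fin m → ZMod p} {Istar : Fin n → ZMod p} {hmn : m ≤ n} {hnl : n ≤ l}

theorem keyMatrix_row_of_two_le {i : Fin (l - m + 2)} (hi : 2 ≤ i.val) :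
    keyMatrix p l m n I Istar hmn hnl i = Pi.single (⟨m + i - 1, by omega⟩ : Fin (l + 1)) 1 := by
  ext x
  simp only [keyMatrix, Pi.single_apply, Fin.ext_iff]
  grind

theorem linearIndependent_keyMatrix_row [Fact p.Prime]
    (hdiff : ∃ j : Fin m, I j ≠ Istar ⟨j.val, lt_of_lt_of_le j.isLt hmn⟩) :
    LinearIndependent (ZMod p) (keyMatrix p l m n I Istar hmn hnl).row := by
  obtain ⟨j, hj⟩ := hdiff
  set M := keyMatrix p l m n I Istar hmn hnl
  let e : Fin 2 ⊕ Fin (l - m) ≃ Fin (l - m + 2) :=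
    finSumFinEquiv.trans (finCongr (Nat.add_comm 2 (l - m)))
  let c : Fin (l - m) → Fin (l + 1) := fun k => ⟨m + 1 + k, by omega⟩
  have hc : Injective c := fun a b h => by simpa [c, Fin.ext_iff] using h
  have hrows : M.row ∘ e = Sum.elim (fun i => M (e (.inl i))) fun k => Pi.single (c k) 1 := by
    ext (i | k) : 1
    · rfl
    · refine (keyMatrix_row_of_two_le (hmn := hmn) (hnl := hnl) (by simp [e])).trans ?_
      congr 1
      ext
      simp only [e, c, Equiv.trans_apply, finSumFinEquiv_apply_right, finCongr_apply,
        Fin.cast_natAdd, Fin.val_addNat]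
      omega
  have hcol {x : Fin (l + 1)} (hx : x.val ≤ m) : x ∈ (range c)ᶜ := by
    rintro ⟨k, rfl⟩
    simp only [c] at hx
    omega
  rw [← linearIndependent_equiv e, hrows]
  refine linearIndependent_sumElim_single_of_restrict _ hc
    (linearIndependent_fin2_of_eq_of_ne (x := ⟨⟨0, by omega⟩, hcol (by simp)⟩)
      (y := ⟨⟨j + 1, by omega⟩, hcol (by simp)⟩) ?_ ?_ ?_)
  · simp [M, e, keyMatrix]
  · simp [M, e, keyMatrix]
  · simpa [M, e, keyMatrix, j.isLt.trans_le hmn] using hj.symm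

end keyMatrix

theorem keyMatrix_rank (p l m n : ℕ) [Fact p.Prime]
    (I : Fin m → ZMod p) (Istar : Fin n → ZMod p)
    (hmn : m ≤ n) (hnl : n ≤ l)
    (hdiff : ∃ j : Fin m, I j ≠ Istar ⟨j.val, lt_of_lt_of_le j.isLt hmn⟩) :
    (keyMatrix p l m n I Istar hmn hnl).rank = l - m + 2 := by
  rw [(linearIndependent_keyMatrix_row hdiff).rank_matrix, Fintype.card_fin]
end

section
/- Let p be prime, and suppose B, A₁,…,A_l are independent uniform random variables over ZMod p. Fix ID = (I₁,…,I_m) and ID* = (I*₁,…,I*_n) with n ≥ m and I_j ≠ I*_j for some j ≤ m. Then the random vector (B + Σ_{i=1}^n A_i I*_i, B + Σ_{i=1}^m A_i I_i, A_{m+1}, …, A_l) is uniformly distributed over (ZMod p)^{l−m+2}. -/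
theorem pushforward_uniform (p l m n : ℕ) [Fact p.Prime]
    (I : Fin m → ZMod p) (Istar : Fin n → ZMod p)
    (hmn : m ≤ n) (hnl : n ≤ l)
    (hdiff : ∃ j : Fin m, I j ≠ Istar ⟨j.val, lt_of_lt_of_le j.isLt hmn⟩)
    (T : (ZMod p × (Fin l → ZMod p)) →
         (ZMod p × ZMod p × (Fin (l - m) → ZMod p)))
    (hT : T = fun x =>
      (x.1 + ∑ i : Fin n, x.2 ⟨i.val, lt_of_lt_of_le i.isLt hnl⟩ * Istar i,
       x.1 + ∑ i : Fin m, x.2 ⟨i.val, lt_of_lt_of_le i.isLt (hmn.trans hnl)⟩ * I i,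
       fun i : Fin (l - m) => x.2 ⟨m + i.val, by omega⟩)) :
    ∀ y : ZMod p × ZMod p × (Fin (l - m) → ZMod p),
      (Finset.univ.filter (fun x => T x = y)).card = p ^ (m - 1) := by
  obtain ⟨j, hj⟩ := hdiff
  have hm : 0 < m := j.pos
  have hml : m ≤ l := hmn.trans hnl
  have hadd : ∀ x x' : ZMod p × (Fin l → ZMod p), T (x + x') = T x + T x' := by
    subst hT
    intro x x'
    simp only [Prod.fst_add, Prod.snd_add, Pi.add_apply, Prod.mk_add_mk, Prod.mk.injEq]
    refine ⟨?_, ?_, ?_⟩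
    · simp only [add_mul, Finset.sum_add_distrib]; ring
    · simp only [add_mul, Finset.sum_add_distrib]; ring
    · funext i; simp
  have hsurj : ∀ y, ∃ x, T x = y := by
    subst hT
    rintro ⟨y1, y2, y3⟩
    have hd0 : Istar ⟨j.val, lt_of_lt_of_le j.isLt hmn⟩ - I j ≠ 0 := sub_ne_zero.mpr (Ne.symm hj)
    set s : ZMod p := ∑ i : Fin n, if h : i.val < m then 0 else y3 ⟨i.val - m, by omega⟩ * Istar i with hs
    set a : ZMod p := (y1 - y2 - s) / (Istar ⟨j.val, lt_of_lt_of_le j.isLt hmn⟩ - I j) with ha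
    set A : Fin l → ZMod p := fun i =>
      if h : i.val < m then (if i.val = j.val then a else 0) else y3 ⟨i.val - m, by omega⟩ with hA
    refine ⟨⟨y2 - a * I j, A⟩, ?_⟩
    have h2 : ∑ i : Fin m, A ⟨i.val, lt_of_lt_of_le i.isLt (hmn.trans hnl)⟩ * I i = a * I j := by
      have e : ∀ i : Fin m, A ⟨i.val, lt_of_lt_of_le i.isLt (hmn.trans hnl)⟩ * I i
          = if i = j then a * I i else 0 := by
        intro i
        simp only [hA, i.isLt, dif_pos, Fin.ext_iff]
        by_cases hij : (i : ℕ) = (j : ℕ) <;> simp [hij]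
      rw [Finset.sum_congr rfl fun i _ => e i, Finset.sum_ite_eq' Finset.univ j (fun i => a * I i)]
      simp
    have h1 : ∑ i : Fin n, A ⟨i.val, lt_of_lt_of_le i.isLt hnl⟩ * Istar i
        = a * Istar ⟨j.val, lt_of_lt_of_le j.isLt hmn⟩ + s := by
      have e : ∀ i : Fin n, A ⟨i.val, lt_of_lt_of_le i.isLt hnl⟩ * Istar i
          = (if i = ⟨j.val, lt_of_lt_of_le j.isLt hmn⟩ then a * Istar i else 0)
            + (if h : i.val < m then 0 else y3 ⟨i.val - m, by omega⟩ * Istar i) := by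
        intro i
        by_cases h : (i : ℕ) < m
        · simp only [hA, h, dif_pos, Fin.ext_iff]
          by_cases hij : (i : ℕ) = (j : ℕ) <;> simp [hij]
        · have hij : ¬ ((i : ℕ) = (j : ℕ)) := by omega
          simp only [hA, h, dif_neg, Fin.ext_iff]
          simp [hij, h]
      rw [Finset.sum_congr rfl fun i _ => e i, Finset.sum_add_distrib,
        Finset.sum_ite_eq' Finset.univ _ (fun i => a * Istar i)]
      simp [hs]
    refine Prod.ext ?_ (Prod.ext ?_ ?_)
    · show y2 - a * I j + _ = y1
      rw [h1, ha]
      field_simp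
      ring
    · show y2 - a * I j + _ = y2
      rw [h2]; ring
    · funext i
      show A ⟨m + i.val, _⟩ = y3 i
      have hni : ¬ (m + i.val < m) := by omega
      simp only [hA, hni, dif_neg]
      exact congrArg y3 (Fin.ext (by simp))
  set c := (Finset.univ.filter (fun x => T x = 0)).card with hc
  have hfib : ∀ y, (Finset.univ.filter (fun x => T x = y)).card = c := by
    intro y
    obtain ⟨x0, hx0⟩ := hsurj y
    rw [hc]
    refine (Finset.card_bij (fun x _ => x + x0) ?_ ?_ ?_).symm
    · intro x hx
      simp only [Finset.mem_filter, Finset.mem_univ, true_and] at hx ⊢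
      rw [hadd, hx, hx0, zero_add]
    · intro x hx x' hx' h
      exact add_right_cancel h
    · intro x hx
      simp only [Finset.mem_filter, Finset.mem_univ, true_and] at hx
      refine ⟨x - x0, ?_, by simp⟩
      simp only [Finset.mem_filter, Finset.mem_univ, true_and]
      have h := hadd (x - x0) x0
      rw [sub_add_cancel, hx, hx0] at h
      have := congrArg (fun z => z - y) h
      simpa using this.symm
  have htotal : Fintype.card (ZMod p × (Fin l → ZMod p))
      = Fintype.card (ZMod p × ZMod p × (Fin (l - m) → ZMod p)) * c := by
    rw [← Finset.card_univ, Finset.card_eq_sum_card_fiberwise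
      (f := T) (fun x _ => Finset.mem_univ (T x))]
    simp [hfib, Finset.card_univ, mul_comm]
  have hcards : p ^ (l - m + 2) * c = p ^ (l + 1) := by
    have h1 : Fintype.card (ZMod p × (Fin l → ZMod p)) = p ^ (l + 1) := by
      simp [ZMod.card, pow_succ, mul_comm]
    have h2 : Fintype.card (ZMod p × ZMod p × (Fin (l - m) → ZMod p)) = p ^ (l - m + 2) := by
      simp [ZMod.card, pow_succ, pow_add]
      ring
    rw [h1, h2] at htotal
    omega
  have hpow : p ^ (l - m + 2) * p ^ (m - 1) = p ^ (l + 1) := by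
    rw [← pow_add]
    congr 1
    omega
  have hc' : c = p ^ (m - 1) :=
    Nat.eq_of_mul_eq_mul_left (pow_pos (Fact.out (p := p.Prime)).pos _)
      (by rw [hcards, hpow])
  intro y
  rw [hfib y, hc']
end
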